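/- arXiv:1502.07588 — 4 statements merged into one kernel-verified Lean document; each statement's English description precedes it below -/
import Mathlib

section
/- Let f : SL_2(C) → C be holomorphic and satisfy H++ · f = 0, where H++ is the left-invariant vector field u^i_+ ∂/∂u^i_-. Then f is the restriction to SL_2(C) of a holomorphic function on GL_2(C) of the form h = Σ_{n,m ≥ 0} c_{nm} (u^1_+)^n (u^2_+)^m, i.e. f depends only on the first column of U, holomorphically. -/
open Matrix

noncomputable section

attribute [local instance] Matrix.normedAddCommGroup Matrix.normedSpace

/-- SL₂(ℂ) as a subset of the 2×2 complex matrices. -/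
def SL2 : Set (Matrix (Fin 2) (Fin 2) ℂ) := {U | U.det = 1}

/-- A function is holomorphic on SL₂(ℂ) iff it is holomorphic on an open neighbourhood of
SL₂(ℂ) in the matrix space (SL₂(ℂ) is a closed Stein submanifold, so this is equivalent to
intrinsic holomorphy). -/
def HolSL2 (f : Matrix (Fin 2) (Fin 2) ℂ → ℂ) : Prop :=
  ∃ Ω : Set (Matrix (Fin 2) (Fin 2) ℂ), IsOpen Ω ∧ SL2 ⊆ Ω ∧ DifferentiableOn ℂ f Ω

/-- Directional derivative of f along the left-invariant vector field corresponding to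
X ∈ sl₂(ℂ), at the point U: (X·f)(U) = df_U(U·X). -/
def lieD (X : Matrix (Fin 2) (Fin 2) ℂ) (f : Matrix (Fin 2) (Fin 2) ℂ → ℂ)
    (U : Matrix (Fin 2) (Fin 2) ℂ) : ℂ := fderiv ℂ f U (U * X)

def H0m : Matrix (Fin 2) (Fin 2) ℂ := !![1, 0; 0, -1]
def Hppm : Matrix (Fin 2) (Fin 2) ℂ := !![0, 1; 0, 0]
def Hmmm : Matrix (Fin 2) (Fin 2) ℂ := !![0, 0; 1, 0]

/-! Right translation by `unip t = exp (t • Hppm)` is the flow of `H₊₊`, so `f` is constant on the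
cosets `U · {unip t}`, i.e. on the fibres of the first-column map `SL₂(ℂ) → ℂ² ∖ {0}`. That map has
holomorphic local sections over `{a ≠ 0}` and `{b ≠ 0}`, so `f = g ∘ (first column)` with `g`
holomorphic on `ℂ² ∖ {0}`. Hartogs' phenomenon then makes `g` an entire double power series: the
Cauchy integrals `P n b = (2πi)⁻¹ ∮_{|z|=1} g (z, b) / z ^ (n + 1)` are entire in `b`, Cauchy
estimates on every bicircle make `∑ c n m a ^ n b ^ m` (with `c n m` the Taylor coefficients of
`P n`) converge everywhere, it sums to `g` when `b ≠ 0` by expanding first in `a` and then in `b`,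
and to `g (a, 0)` by continuity in `b`. -/

open Complex Metric Filter Topology Nat Real

def taylorCoeff (h : ℂ → ℂ) (n : ℕ) : ℂ := (n ! : ℂ)⁻¹ * iteratedDeriv n h 0

lemma hasSum_taylorCoeff {h : ℂ → ℂ} (hh : Differentiable ℂ h) (z : ℂ) :
    HasSum (fun n => taylorCoeff h n * z ^ n) (h z) := by
  refine (Complex.hasSum_taylorSeries_of_entire hh 0 z).congr_fun fun n => ?_
  simp only [taylorCoeff, sub_zero, smul_eq_mul]
  ring

lemma norm_taylorCoeff_le {h : ℂ → ℂ} (hh : Differentiable ℂ h) {R M : ℝ} (hR : 0 < R)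
    (hM : ∀ z ∈ sphere (0 : ℂ) R, ‖h z‖ ≤ M) (n : ℕ) :
    ‖taylorCoeff h n‖ ≤ M / R ^ n := by
  have hn : (0 : ℝ) < n ! := mod_cast n.factorial_pos
  have := norm_iteratedDeriv_le_of_forall_mem_sphere_norm_le n hR hh.diffContOnCl hM
  rw [taylorCoeff, norm_mul, norm_inv, Complex.norm_natCast, inv_mul_le_iff₀ hn]
  simpa only [mul_div_assoc] using this

lemma taylorCoeff_eq_circleIntegral {h : ℂ → ℂ} (hh : Differentiable ℂ h) (n : ℕ) :
    taylorCoeff h n = (2 * π * I)⁻¹ * ∮ z in C(0, 1), h z / z ^ (n + 1) := by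
  have := hh.differentiableOn.circleIntegral_one_div_sub_center_pow_smul (c := 0) one_pos n
  simp only [sub_zero, smul_eq_mul, one_div] at this
  simp_rw [div_eq_inv_mul, this, taylorCoeff]
  field_simp [two_pi_I_ne_zero]

lemma differentiable_circleIntegral_param {F : ℂ × ℂ → ℂ} {c : ℂ} {R : ℝ} (hR : 0 ≤ R)
    (hF : ∀ z ∈ sphere c R, ∀ b, DifferentiableAt ℂ F (z, b)) :
    Differentiable ℂ fun b => ∮ z in C(c, R), F (z, b) := by
  intro b₀
  obtain ⟨M, hM⟩ : ∃ M, ∀ p ∈ sphere c R ×ˢ closedBall b₀ 2, ‖F p‖ ≤ M :=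
    ((isCompact_sphere c R).prod (isCompact_closedBall b₀ 2)).exists_bound_of_continuousOn
      fun p hp => (hF p.1 hp.1 p.2).continuousAt.continuousWithinAt
  have hpartial : ∀ z ∈ sphere c R, ∀ b,
      HasDerivAt (fun b => F (z, b)) (fderiv ℂ F (z, b) (0, 1)) b := fun z hz b =>
    (hF z hz b).hasFDerivAt.comp_hasDerivAt b ((hasDerivAt_const b z).prodMk (hasDerivAt_id b))
  -- Cauchy's estimate in the parameter, on circles of radius 1 inside `closedBall b₀ 2`
  have hpartial_le : ∀ z ∈ sphere c R, ∀ b ∈ ball b₀ 1, ‖fderiv ℂ F (z, b) (0, 1)‖ ≤ M := by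
    intro z hz b hb
    rw [← (hpartial z hz b).deriv]
    refine (norm_deriv_le_of_forall_mem_sphere_norm_le one_pos
      (Differentiable.diffContOnCl fun b => (hpartial z hz b).differentiableAt)
      fun w hw => hM (z, w) ⟨hz, ?_⟩).trans_eq (div_one M)
    rw [mem_closedBall]
    linarith [dist_triangle w b b₀, mem_sphere.1 hw, mem_ball.1 hb]
  have hcircle : ∀ b, Continuous fun θ => F (circleMap c R θ, b) := fun b =>
    continuous_iff_continuousAt.2 fun θ =>
      (hF _ (circleMap_mem_sphere c hR θ) b).continuousAt.comp (x := θ)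
        (f := fun θ => (circleMap c R θ, b)) (by fun_prop)
  have hderiv : Continuous (deriv (circleMap c R)) := by
    rw [funext (deriv_circleMap c R)]
    fun_prop
  have key := intervalIntegral.hasDerivAt_integral_of_dominated_loc_of_deriv_le
    (μ := MeasureTheory.volume) (a := 0) (b := 2 * π)
    (F := fun b θ => deriv (circleMap c R) θ • F (circleMap c R θ, b))
    (F' := fun b θ => deriv (circleMap c R) θ • fderiv ℂ F (circleMap c R θ, b) (0, 1))
    (bound := fun _ => R * M) (ball_mem_nhds b₀ one_pos)
    (Eventually.of_forall fun b => (hderiv.smul (hcircle b)).aestronglyMeasurable)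
    ((hderiv.smul (hcircle b₀)).intervalIntegrable _ _) ?_ ?_ intervalIntegrable_const ?_
  · exact key.2.differentiableAt
  · exact (hderiv.measurable.smul
      ((measurable_fderiv_apply_const ℂ F _).comp (by fun_prop))).aestronglyMeasurable
  · refine MeasureTheory.ae_of_all _ fun θ _ b hb => ?_
    rw [norm_smul, deriv_circleMap, norm_mul, norm_circleMap_zero, norm_I, mul_one,
      abs_of_nonneg hR]
    exact mul_le_mul_of_nonneg_left
      (hpartial_le _ (circleMap_mem_sphere c hR θ) b hb) hR
  · exact MeasureTheory.ae_of_all _ fun θ _ b _ =>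
      (hpartial _ (circleMap_mem_sphere c hR θ) b).const_mul _

section DoubleSeries

variable {c : ℕ × ℕ → ℂ}

lemma summable_norm_of_forall_norm_le
    (hc : ∀ r s : ℝ, 0 < r → 0 < s → ∃ C, ∀ n m, ‖c (n, m)‖ ≤ C / (r ^ n * s ^ m)) (a b : ℂ) :
    Summable fun nm : ℕ × ℕ => ‖c nm * a ^ nm.1 * b ^ nm.2‖ := by
  obtain ⟨C, hC⟩ := hc (‖a‖ + 1) (‖b‖ + 1) (by positivity) (by positivity)
  have hq : ∀ x : ℂ, 0 ≤ ‖x‖ / (‖x‖ + 1) ∧ ‖x‖ / (‖x‖ + 1) < 1 := fun x =>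
    ⟨by positivity, (div_lt_one (by positivity)).2 (lt_add_one _)⟩
  have hmajorant : Summable fun nm : ℕ × ℕ =>
      C * ((‖a‖ / (‖a‖ + 1)) ^ nm.1 * (‖b‖ / (‖b‖ + 1)) ^ nm.2) :=
    ((summable_geometric_of_lt_one (hq a).1 (hq a).2).mul_of_nonneg
      (summable_geometric_of_lt_one (hq b).1 (hq b).2)
      (fun _ => pow_nonneg (hq a).1 _) (fun _ => pow_nonneg (hq b).1 _)).mul_left C
  refine hmajorant.of_nonneg_of_le (fun _ => norm_nonneg _) fun ⟨n, m⟩ => ?_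
  calc ‖c (n, m) * a ^ n * b ^ m‖ = ‖c (n, m)‖ * ‖a‖ ^ n * ‖b‖ ^ m := by
        simp only [norm_mul, norm_pow]
    _ ≤ C / ((‖a‖ + 1) ^ n * (‖b‖ + 1) ^ m) * ‖a‖ ^ n * ‖b‖ ^ m := by
        gcongr
        exact hC n m
    _ = C * ((‖a‖ / (‖a‖ + 1)) ^ n * (‖b‖ / (‖b‖ + 1)) ^ m) := by
        rw [div_pow, div_pow]
        field_simp

lemma continuous_tsum_mul_pow_mul_pow
    (hc : ∀ a b : ℂ, Summable fun nm : ℕ × ℕ => ‖c nm * a ^ nm.1 * b ^ nm.2‖) (a : ℂ) :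
    Continuous fun b : ℂ => ∑' nm : ℕ × ℕ, c nm * a ^ nm.1 * b ^ nm.2 := by
  refine continuous_iff_continuousAt.2 fun b₀ => ?_
  have hon : ContinuousOn (fun b : ℂ => ∑' nm : ℕ × ℕ, c nm * a ^ nm.1 * b ^ nm.2)
      (ball 0 (‖b₀‖ + 1)) := by
    refine continuousOn_tsum (fun nm => by fun_prop) (hc a ((‖b₀‖ + 1 : ℝ) : ℂ))
      fun nm b hb => ?_
    rw [mem_ball_zero_iff] at hb
    simp only [norm_mul, norm_pow]
    gcongr
    rw [Complex.norm_of_nonneg (by positivity)]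
    exact hb.le
  exact hon.continuousAt (isOpen_ball.mem_nhds (by simp))

end DoubleSeries

/-- The `n`-th Taylor coefficient of `a ↦ g (a, b)`, written as a Cauchy integral so that it is
defined, and entire in `b`, even where that slice is not known to be holomorphic at `0`. -/
def partialTaylorCoeff (g : ℂ × ℂ → ℂ) (n : ℕ) (b : ℂ) : ℂ :=
  (2 * π * I)⁻¹ * ∮ z in C(0, 1), g (z, b) / z ^ (n + 1)

def doubleTaylorCoeff (g : ℂ × ℂ → ℂ) (nm : ℕ × ℕ) : ℂ :=
  taylorCoeff (partialTaylorCoeff g nm.1) nm.2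

section Hartogs

variable {g : ℂ × ℂ → ℂ}

lemma differentiableAt_of_differentiableOn_compl_zero (hg : DifferentiableOn ℂ g {0}ᶜ)
    {p : ℂ × ℂ} (hp : p ≠ 0) : DifferentiableAt ℂ g p :=
  hg.differentiableAt (isOpen_compl_singleton.mem_nhds hp)

lemma differentiable_slice_fst (hg : DifferentiableOn ℂ g {0}ᶜ) {b : ℂ} (hb : b ≠ 0) :
    Differentiable ℂ fun a => g (a, b) := fun a =>
  (differentiableAt_of_differentiableOn_compl_zero hg (by simp [hb])).comp a (by fun_prop)

lemma differentiable_slice_snd (hg : DifferentiableOn ℂ g {0}ᶜ) {a : ℂ} (ha : a ≠ 0) :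
    Differentiable ℂ fun b => g (a, b) := fun b =>
  (differentiableAt_of_differentiableOn_compl_zero hg (by simp [ha])).comp b (by fun_prop)

lemma differentiable_partialTaylorCoeff (hg : DifferentiableOn ℂ g {0}ᶜ) (n : ℕ) :
    Differentiable ℂ (partialTaylorCoeff g n) := by
  refine (differentiable_circleIntegral_param (F := fun p => g p / p.1 ^ (n + 1))
    zero_le_one fun z hz b => ?_).const_mul _
  have hz : z ≠ 0 := ne_zero_of_mem_sphere one_ne_zero ⟨z, hz⟩
  show DifferentiableAt ℂ (fun p : ℂ × ℂ => g p / p.1 ^ (n + 1)) (z, b)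
  have := differentiableAt_of_differentiableOn_compl_zero hg (p := (z, b)) (by simp [hz])
  fun_prop (disch := exact pow_ne_zero _ hz)

lemma partialTaylorCoeff_eq_taylorCoeff (hg : DifferentiableOn ℂ g {0}ᶜ) {b : ℂ} (hb : b ≠ 0)
    (n : ℕ) : partialTaylorCoeff g n b = taylorCoeff (fun a => g (a, b)) n :=
  (taylorCoeff_eq_circleIntegral (differentiable_slice_fst hg hb) n).symm

lemma norm_doubleTaylorCoeff_le (hg : DifferentiableOn ℂ g {0}ᶜ) {r s : ℝ} (hr : 0 < r)
    (hs : 0 < s) : ∃ C, ∀ n m, ‖doubleTaylorCoeff g (n, m)‖ ≤ C / (r ^ n * s ^ m) := by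
  have h0 : (0 : ℂ × ℂ) ∉ sphere 0 r ×ˢ sphere 0 s := fun h => by
    simpa [hr.ne] using h.1
  obtain ⟨M, hM⟩ := ((isCompact_sphere (0 : ℂ) r).prod
    (isCompact_sphere (0 : ℂ) s)).exists_bound_of_continuousOn fun p hp =>
      (differentiableAt_of_differentiableOn_compl_zero hg
        (ne_of_mem_of_not_mem hp h0)).continuousAt.continuousWithinAt
  refine ⟨M, fun n m => ?_⟩
  have hcoeff : ∀ b ∈ sphere (0 : ℂ) s, ‖partialTaylorCoeff g n b‖ ≤ M / r ^ n := by
    intro b hb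
    have hb0 : b ≠ 0 := ne_zero_of_mem_sphere hs.ne' ⟨b, hb⟩
    rw [partialTaylorCoeff_eq_taylorCoeff hg hb0]
    exact norm_taylorCoeff_le (differentiable_slice_fst hg hb0) hr
      (fun a ha => hM (a, b) ⟨ha, hb⟩) n
  rw [← div_div]
  exact norm_taylorCoeff_le (differentiable_partialTaylorCoeff hg n) hs hcoeff m

lemma summable_norm_doubleTaylorCoeff (hg : DifferentiableOn ℂ g {0}ᶜ) (a b : ℂ) :
    Summable fun nm : ℕ × ℕ => ‖doubleTaylorCoeff g nm * a ^ nm.1 * b ^ nm.2‖ :=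
  summable_norm_of_forall_norm_le (fun _ _ hr hs => norm_doubleTaylorCoeff_le hg hr hs) a b

lemma hasSum_doubleTaylorCoeff_of_snd_ne_zero (hg : DifferentiableOn ℂ g {0}ᶜ) (a : ℂ)
    {b : ℂ} (hb : b ≠ 0) :
    HasSum (fun nm : ℕ × ℕ => doubleTaylorCoeff g nm * a ^ nm.1 * b ^ nm.2) (g (a, b)) := by
  have hsum := (summable_norm_doubleTaylorCoeff hg a b).of_norm.hasSum
  have hrows : ∀ n, HasSum (fun m => doubleTaylorCoeff g (n, m) * a ^ n * b ^ m)
      (partialTaylorCoeff g n b * a ^ n) := fun n =>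
    ((hasSum_taylorCoeff (differentiable_partialTaylorCoeff hg n) b).mul_right (a ^ n)).congr_fun
      fun m => by simp only [doubleTaylorCoeff]; ring
  have hcols : HasSum (fun n => partialTaylorCoeff g n b * a ^ n) (g (a, b)) := by
    simp_rw [partialTaylorCoeff_eq_taylorCoeff hg hb]
    exact hasSum_taylorCoeff (differentiable_slice_fst hg hb) a
  rwa [(hsum.prod_fiberwise hrows).unique hcols] at hsum

theorem hasSum_doubleTaylorCoeff (hg : DifferentiableOn ℂ g {0}ᶜ) {p : ℂ × ℂ} (hp : p ≠ 0) :
    HasSum (fun nm : ℕ × ℕ => doubleTaylorCoeff g nm * p.1 ^ nm.1 * p.2 ^ nm.2) (g p) := by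
  obtain ⟨a, b⟩ := p
  rcases ne_or_eq b 0 with hb | rfl
  · exact hasSum_doubleTaylorCoeff_of_snd_ne_zero hg a hb
  have ha : a ≠ 0 := by simpa using hp
  -- both sides are continuous in `b` and agree for `b ≠ 0`
  have hseries := (continuous_tsum_mul_pow_mul_pow
    (summable_norm_doubleTaylorCoeff hg) a).continuousAt (x := 0)
  have hslice := (differentiable_slice_snd hg ha).continuous.continuousAt (x := 0)
  have heq : (fun b => g (a, b)) =ᶠ[𝓝[≠] 0]
      fun b => ∑' nm : ℕ × ℕ, doubleTaylorCoeff g nm * a ^ nm.1 * b ^ nm.2 :=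
    eventually_nhdsWithin_of_forall fun b hb =>
      (hasSum_doubleTaylorCoeff_of_snd_ne_zero hg a hb).tsum_eq.symm
  have hval := tendsto_nhds_unique (hseries.tendsto.mono_left nhdsWithin_le_nhds)
    ((hslice.tendsto.mono_left nhdsWithin_le_nhds).congr' heq)
  simpa only [hval] using (summable_norm_doubleTaylorCoeff hg a 0).of_norm.hasSum

end Hartogs

def unip (t : ℂ) : Matrix (Fin 2) (Fin 2) ℂ := !![1, t; 0, 1]

lemma mul_unip_eq_add_smul (V : Matrix (Fin 2) (Fin 2) ℂ) (t : ℂ) :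
    V * unip t = V + t • (V * Hppm) := by
  ext i j
  fin_cases i <;> fin_cases j <;> simp [unip, Hppm, Matrix.mul_apply, Fin.sum_univ_two] <;> ring

lemma unip_mul_Hppm (t : ℂ) : unip t * Hppm = Hppm := by
  ext i j
  fin_cases i <;> fin_cases j <;> simp [unip, Hppm, Matrix.mul_apply, Fin.sum_univ_two]

lemma mem_SL2_iff {U : Matrix (Fin 2) (Fin 2) ℂ} :
    U ∈ SL2 ↔ U 0 0 * U 1 1 - U 0 1 * U 1 0 = 1 := by
  rw [← det_fin_two]
  rfl

lemma mul_unip_mem_SL2 {V : Matrix (Fin 2) (Fin 2) ℂ} (hV : V ∈ SL2) (t : ℂ) :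
    V * unip t ∈ SL2 := by
  have hunip : (unip t).det = 1 := by simp [unip, det_fin_two_of]
  change (V * unip t).det = 1
  rw [det_mul, hunip, mul_one]
  exact hV

lemma col_ne_zero_of_mem_SL2 {U : Matrix (Fin 2) (Fin 2) ℂ} (hU : U ∈ SL2) :
    (U 0 0, U 1 0) ≠ 0 := by
  rw [mem_SL2_iff] at hU
  intro h
  simp only [Prod.mk_eq_zero] at h
  simp [h.1, h.2] at hU

lemma exists_eq_mul_unip {U V : Matrix (Fin 2) (Fin 2) ℂ} (hU : U ∈ SL2) (hV : V ∈ SL2)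
    (h₀ : U 0 0 = V 0 0) (h₁ : U 1 0 = V 1 0) : ∃ t, U = V * unip t := by
  rw [mem_SL2_iff] at hU hV
  rw [h₀, h₁] at hU
  refine ⟨V 1 1 * U 0 1 - V 0 1 * U 1 1, ?_⟩
  ext i j
  fin_cases i <;> fin_cases j <;>
    simp [unip, Matrix.mul_apply, Fin.sum_univ_two, h₀, h₁]
  · linear_combination V 0 1 * hU - U 0 1 * hV
  · linear_combination V 1 1 * hU - U 1 1 * hV

def sectionFst (p : ℂ × ℂ) : Matrix (Fin 2) (Fin 2) ℂ := !![p.1, 0; p.2, p.1⁻¹]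

def sectionSnd (p : ℂ × ℂ) : Matrix (Fin 2) (Fin 2) ℂ := !![p.1, -p.2⁻¹; p.2, 0]

def colLift (p : ℂ × ℂ) : Matrix (Fin 2) (Fin 2) ℂ :=
  if p.1 = 0 then sectionSnd p else sectionFst p

lemma sectionFst_mem_SL2 {p : ℂ × ℂ} (hp : p.1 ≠ 0) : sectionFst p ∈ SL2 := by
  simp [mem_SL2_iff, sectionFst, hp]

lemma sectionSnd_mem_SL2 {p : ℂ × ℂ} (hp : p.2 ≠ 0) : sectionSnd p ∈ SL2 := by
  simp [mem_SL2_iff, sectionSnd, hp]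

lemma colLift_mem_SL2 {p : ℂ × ℂ} (hp : p ≠ 0) : colLift p ∈ SL2 := by
  unfold colLift
  split_ifs with h
  · exact sectionSnd_mem_SL2 fun h' => hp (Prod.ext h h')
  · exact sectionFst_mem_SL2 h

@[simp] lemma colLift_zero_zero (p : ℂ × ℂ) : colLift p 0 0 = p.1 := by
  unfold colLift; split_ifs <;> simp [sectionFst, sectionSnd]

@[simp] lemma colLift_one_zero (p : ℂ × ℂ) : colLift p 1 0 = p.2 := by
  unfold colLift; split_ifs <;> simp [sectionFst, sectionSnd]

lemma differentiableAt_sectionFst {p : ℂ × ℂ} (hp : p.1 ≠ 0) :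
    DifferentiableAt ℂ sectionFst p := by
  have h : DifferentiableAt ℂ (fun q : ℂ × ℂ => (sectionFst q : Fin 2 → Fin 2 → ℂ)) p := by
    refine differentiableAt_pi.2 fun i => differentiableAt_pi.2 fun j => ?_
    fin_cases i <;> fin_cases j <;> simp [sectionFst]
    fun_prop (disch := exact hp)
  exact h

lemma differentiableAt_sectionSnd {p : ℂ × ℂ} (hp : p.2 ≠ 0) :
    DifferentiableAt ℂ sectionSnd p := by
  have h : DifferentiableAt ℂ (fun q : ℂ × ℂ => (sectionSnd q : Fin 2 → Fin 2 → ℂ)) p := by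
    refine differentiableAt_pi.2 fun i => differentiableAt_pi.2 fun j => ?_
    fin_cases i <;> fin_cases j <;> simp [sectionSnd]
    fun_prop (disch := exact hp)
  exact h

section Invariance

variable {f : Matrix (Fin 2) (Fin 2) ℂ → ℂ} (hf : ∀ U ∈ SL2, DifferentiableAt ℂ f U)
  (heq : ∀ U ∈ SL2, lieD Hppm f U = 0)
include hf heq

lemma apply_mul_unip {V : Matrix (Fin 2) (Fin 2) ℂ} (hV : V ∈ SL2) (t : ℂ) :
    f (V * unip t) = f V := by
  have hderiv : ∀ s, HasDerivAt (fun s => f (V * unip s)) 0 s := by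
    intro s
    have hline : HasDerivAt (fun s : ℂ => V * unip s) (V * Hppm) s := by
      simp_rw [mul_unip_eq_add_smul]
      have h := ((hasDerivAt_id s).smul_const (V * Hppm)).const_add V
      rw [one_smul] at h
      exact h
    have h := (hf _ (mul_unip_mem_SL2 hV s)).hasFDerivAt.comp_hasDerivAt s hline
    -- the velocity `V * Hppm` is `(V * unip s) * Hppm`, the value of `H₊₊` at `V * unip s`
    have hlie := heq _ (mul_unip_mem_SL2 hV s)
    rw [lieD, Matrix.mul_assoc, unip_mul_Hppm] at hlie
    exact hlie ▸ h
  simpa [mul_unip_eq_add_smul] using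
    is_const_of_deriv_eq_zero (fun s => (hderiv s).differentiableAt) (fun s => (hderiv s).deriv) t 0

lemma apply_eq_of_col_eq {U V : Matrix (Fin 2) (Fin 2) ℂ} (hU : U ∈ SL2) (hV : V ∈ SL2)
    (h₀ : U 0 0 = V 0 0) (h₁ : U 1 0 = V 1 0) : f U = f V := by
  obtain ⟨t, rfl⟩ := exists_eq_mul_unip hU hV h₀ h₁
  exact apply_mul_unip hf heq hV t

lemma apply_eq_apply_colLift {U : Matrix (Fin 2) (Fin 2) ℂ} (hU : U ∈ SL2) :
    f U = f (colLift (U 0 0, U 1 0)) :=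
  apply_eq_of_col_eq hf heq hU (colLift_mem_SL2 (col_ne_zero_of_mem_SL2 hU)) (by simp) (by simp)

lemma differentiableAt_comp_colLift_of_section {σ : ℂ × ℂ → Matrix (Fin 2) (Fin 2) ℂ}
    {p : ℂ × ℂ} (hcol : ∀ q, σ q 0 0 = q.1 ∧ σ q 1 0 = q.2) (hmem : ∀ᶠ q in 𝓝 p, σ q ∈ SL2)
    (hσ : DifferentiableAt ℂ σ p) : DifferentiableAt ℂ (f ∘ colLift) p := by
  refine ((hf _ hmem.self_of_nhds).comp p hσ).congr_of_eventuallyEq ?_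
  filter_upwards [hmem] with q hq
  simp only [Function.comp, apply_eq_apply_colLift hf heq hq, (hcol q).1, (hcol q).2]

lemma differentiableOn_comp_colLift : DifferentiableOn ℂ (f ∘ colLift) {0}ᶜ := by
  intro ⟨a, b⟩ hp
  refine DifferentiableAt.differentiableWithinAt ?_
  by_cases ha : a = 0
  · have hb : b ≠ 0 := fun hb => hp (by simp [ha, hb])
    refine differentiableAt_comp_colLift_of_section hf heq (σ := sectionSnd)
      (fun q => by simp [sectionSnd]) ?_ (differentiableAt_sectionSnd hb)
    filter_upwards [continuous_snd.isOpen_preimage _ isOpen_compl_singleton |>.mem_nhds hb]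
      with q hq using sectionSnd_mem_SL2 hq
  · refine differentiableAt_comp_colLift_of_section hf heq (σ := sectionFst)
      (fun q => by simp [sectionFst]) ?_ (differentiableAt_sectionFst ha)
    filter_upwards [continuous_fst.isOpen_preimage _ isOpen_compl_singleton |>.mem_nhds ha]
      with q hq using sectionFst_mem_SL2 hq

end Invariance

theorem stmt_7 (f : Matrix (Fin 2) (Fin 2) ℂ → ℂ) (hf : HolSL2 f)
    (heq : ∀ U ∈ SL2, lieD Hppm f U = 0) :
    ∃ c : ℕ × ℕ → ℂ,
      (∀ a b : ℂ, Summable fun nm : ℕ × ℕ => c nm * a ^ nm.1 * b ^ nm.2) ∧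
      ∀ U ∈ SL2,
        HasSum (fun nm : ℕ × ℕ => c nm * U 0 0 ^ nm.1 * U 1 0 ^ nm.2) (f U) := by
  obtain ⟨Ω, hΩ, hsub, hfd⟩ := hf
  have hdiff : ∀ U ∈ SL2, DifferentiableAt ℂ f U := fun U hU =>
    hfd.differentiableAt (hΩ.mem_nhds (hsub hU))
  have hg := differentiableOn_comp_colLift hdiff heq
  refine ⟨doubleTaylorCoeff (f ∘ colLift),
    fun a b => (summable_norm_doubleTaylorCoeff hg a b).of_norm, fun U hU => ?_⟩
  have h := hasSum_doubleTaylorCoeff hg (col_ne_zero_of_mem_SL2 hU)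
  rwa [Function.comp_apply, ← apply_eq_apply_colLift hdiff heq hU] at h
end
end

section
/- Let k ≥ 0 be an integer and g : SL_2(C) → C holomorphic with H0 · g = (k+2)g. If f_o is one holomorphic solution of H0·f = kf, H++·f = g, then the set of all holomorphic solutions is exactly { f_o + Σ_{m,n ≥ 0, m+n = k} c_{mn} (u^1_+)^m (u^2_+)^n |_{SL_2(C)} : c_{mn} ∈ C }; in particular the solution space is an affine space over a vector space of dimension k + 1. -/
open Matrix

noncomputable section

attribute [local instance] Matrix.normedAddCommGroup Matrix.normedSpace

/-!
A highest-weight vector `h` (`H₊₊·h = 0`, `H₀·h = k h`) is invariant under the unipotent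
one-parameter subgroup and scales by `eᵏᵗ` under `diag(eᵗ, e⁻ᵗ)`, so `h (M b) = aᵏ h M` for
every upper triangular `b = [[a, *], [0, a⁻¹]]`. Every `U ∈ SL₂(ℂ)` is `[[z, -1], [1, 0]] b` or
`[[1, 0], [w, 1]] b`, so `h` is determined by the entire functions `ψ z = h [[z, -1], [1, 0]]`
and `χ w = h [[1, 0], [w, 1]]`, related by `ψ z = zᵏ χ z⁻¹`. Hence `ψ` grows at most like
`|z|ᵏ`, and Cauchy's estimates make it a polynomial of degree `≤ k`; substituting back, `h U` is
a binary form of degree `k` in the first column of `U`. The difference of two solutions is a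
highest-weight vector, and conversely each such binary form is one.
-/

local notation "Mat" => Matrix (Fin 2) (Fin 2) ℂ

lemma HolSL2.differentiableAt {f : Mat → ℂ} (hf : HolSL2 f) {U : Mat} (hU : U ∈ SL2) :
    DifferentiableAt ℂ f U := by
  obtain ⟨Ω, hΩ, hsub, hd⟩ := hf
  exact hd.differentiableAt (hΩ.mem_nhds (hsub hU))

lemma HolSL2.sub {f g : Mat → ℂ} (hf : HolSL2 f) (hg : HolSL2 g) :
    HolSL2 (fun V => f V - g V) := by
  obtain ⟨Ω, hΩ, hsub, hd⟩ := hf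
  obtain ⟨Ω', hΩ', hsub', hd'⟩ := hg
  exact ⟨Ω ∩ Ω', hΩ.inter hΩ', Set.subset_inter hsub hsub',
    (hd.mono Set.inter_subset_left).sub (hd'.mono Set.inter_subset_right)⟩

lemma HolSL2.differentiable_comp {f : Mat → ℂ} (hf : HolSL2 f) {γ : ℂ → Mat}
    (hγ : Differentiable ℂ γ) (hmem : ∀ z, γ z ∈ SL2) : Differentiable ℂ (fun z => f (γ z)) :=
  fun z => (hf.differentiableAt (hmem z)).comp z (hγ z)

lemma lieD_sub {f g : Mat → ℂ} {U : Mat} (hf : DifferentiableAt ℂ f U)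
    (hg : DifferentiableAt ℂ g U) (X : Mat) :
    lieD X (fun V => f V - g V) U = lieD X f U - lieD X g U := by
  have h : fderiv ℂ (fun V => f V - g V) U = fderiv ℂ f U - fderiv ℂ g U :=
    fderiv_fun_sub hf hg
  rw [lieD, h]
  rfl

lemma mul_mem_SL2 {U V : Mat} (hU : U ∈ SL2) (hV : V ∈ SL2) : U * V ∈ SL2 := by
  simp_all [SL2, Matrix.det_mul]

lemma hasDerivAt_apply_mul {f : Mat → ℂ} {γ : ℂ → Mat} {X U : Mat} {s : ℂ}
    (hγ : HasDerivAt γ (γ s * X) s) (hf : DifferentiableAt ℂ f (U * γ s)) :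
    HasDerivAt (fun s => f (U * γ s)) (lieD X f (U * γ s)) s := by
  have hUγ : HasDerivAt (fun s => U * γ s) (U * γ s * X) s := by
    rw [mul_assoc]
    exact (LinearMap.mulLeft ℂ U).toContinuousLinearMap.hasFDerivAt.comp_hasDerivAt s hγ
  exact hf.hasFDerivAt.comp_hasDerivAt s hUγ

lemma eq_exp_mul_of_hasDerivAt {F : ℂ → ℂ} {μ : ℂ} (hF : ∀ t, HasDerivAt F (μ * F t) t)
    (t : ℂ) : F t = Complex.exp (μ * t) * F 0 := by
  have hG : ∀ t, HasDerivAt (fun t => Complex.exp (-(μ * t)) * F t) 0 t := fun t => by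
    have he : HasDerivAt (fun t => Complex.exp (-(μ * t))) (Complex.exp (-(μ * t)) * -μ) t :=
      (((hasDerivAt_id' t).const_mul μ).fun_neg.congr_deriv (by ring)).cexp
    exact (he.mul (hF t)).congr_deriv (by ring)
  have := is_const_of_deriv_eq_zero (fun t => (hG t).differentiableAt) (fun t => (hG t).deriv) t 0
  simp only [mul_zero, neg_zero, Complex.exp_zero, one_mul] at this
  rw [← this, ← mul_assoc, ← Complex.exp_add, add_neg_cancel, Complex.exp_zero, one_mul]

-- The ODE `γ' = γ X`, `γ 0 = 1` characterises `s ↦ exp (s • X)`.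
structure IsOneParamSubgroup (X : Mat) (γ : ℂ → Mat) : Prop where
  map_zero : γ 0 = 1
  mem_SL2 : ∀ s, γ s ∈ SL2
  hasDerivAt : ∀ s, HasDerivAt γ (γ s * X) s

lemma IsOneParamSubgroup.apply_mul_eq_exp_mul {X : Mat} {γ : ℂ → Mat}
    (hγ : IsOneParamSubgroup X γ) {f : Mat → ℂ} (hf : HolSL2 f) {μ : ℂ}
    (hfX : ∀ U ∈ SL2, lieD X f U = μ * f U) {U : Mat} (hU : U ∈ SL2) (t : ℂ) :
    f (U * γ t) = Complex.exp (μ * t) * f U := by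
  have hmem s : U * γ s ∈ SL2 := mul_mem_SL2 hU (hγ.mem_SL2 s)
  have := eq_exp_mul_of_hasDerivAt (F := fun s => f (U * γ s)) (μ := μ) (fun s => by
    rw [← hfX _ (hmem s)]
    exact hasDerivAt_apply_mul (hγ.hasDerivAt s) (hf.differentiableAt (hmem s))) t
  rwa [hγ.map_zero, mul_one] at this

-- `f` and `f₀ + p` need only agree on SL₂, since the derivative is taken along `s ↦ U * γ s`.
lemma IsOneParamSubgroup.lieD_eq_of_eqOn_add {X : Mat} {γ : ℂ → Mat}
    (hγ : IsOneParamSubgroup X γ) {f f₀ p : Mat → ℂ} (hf : HolSL2 f) (hf₀ : HolSL2 f₀) {μ : ℂ}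
    (hp : ∀ U ∈ SL2, ∀ t, p (U * γ t) = Complex.exp (μ * t) * p U)
    (hfp : ∀ U ∈ SL2, f U = f₀ U + p U) {U : Mat} (hU : U ∈ SL2) :
    lieD X f U = lieD X f₀ U + μ * p U := by
  have hmem s : U * γ s ∈ SL2 := mul_mem_SL2 hU (hγ.mem_SL2 s)
  have hU0 : U * γ 0 = U := by rw [hγ.map_zero, mul_one]
  have hderiv := hasDerivAt_apply_mul (hγ.hasDerivAt 0) (hf.differentiableAt (hmem 0))
  have hderiv₀ := hasDerivAt_apply_mul (hγ.hasDerivAt 0) (hf₀.differentiableAt (hmem 0))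
  have hexp : HasDerivAt (fun t => Complex.exp (μ * t) * p U) (μ * p U) 0 := by
    simpa using (((hasDerivAt_id (0 : ℂ)).const_mul μ).cexp).mul_const (p U)
  rw [hU0] at hderiv hderiv₀
  refine hderiv.unique ?_
  convert hderiv₀.add hexp using 1
  funext s
  rw [hfp _ (hmem s), hp U hU]
  rfl

def unipotent (s : ℂ) : Mat := !![1, s; 0, 1]

def torus (t : ℂ) : Mat := !![Complex.exp t, 0; 0, Complex.exp (-t)]

lemma isOneParamSubgroup_unipotent : IsOneParamSubgroup Hppm unipotent where
  map_zero := by simp [unipotent, Matrix.one_fin_two]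
  mem_SL2 s := by simp [SL2, unipotent]
  hasDerivAt s := by
    have h : unipotent = fun s : ℂ => 1 + s • Hppm := by
      funext s; ext i j; fin_cases i <;> fin_cases j <;> simp [unipotent, Hppm]
    have h' : unipotent s * Hppm = Hppm := by
      ext i j; fin_cases i <;> fin_cases j <;> simp [unipotent, Hppm]
    rw [h', h]
    exact (((hasDerivAt_id s).smul_const Hppm).const_add 1).congr_deriv (one_smul _ _)

lemma isOneParamSubgroup_torus : IsOneParamSubgroup H0m torus where
  map_zero := by simp [torus, Matrix.one_fin_two]
  mem_SL2 s := by simp [SL2, torus, ← Complex.exp_add]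
  hasDerivAt s := by
    have h : torus = fun t : ℂ =>
        Complex.exp t • !![1, 0; 0, 0] + Complex.exp (-t) • !![0, 0; 0, 1] := by
      funext t; ext i j; fin_cases i <;> fin_cases j <;> simp [torus]
    have h' : torus s * H0m =
        Complex.exp s • !![1, 0; 0, 0] + (Complex.exp (-s) * -1) • !![0, 0; 0, 1] := by
      ext i j; fin_cases i <;> fin_cases j <;> simp [torus, H0m]
    rw [h', h]
    exact ((Complex.hasDerivAt_exp s).smul_const _).add
      (((hasDerivAt_id s).neg.cexp).smul_const _)

lemma upperTriangular_eq_torus_mul_unipotent {a : ℂ} (ha : a ≠ 0) (b : ℂ) :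
    !![a, b; 0, a⁻¹] = torus (Complex.log a) * unipotent (b / a) := by
  ext i j
  fin_cases i <;> fin_cases j <;>
    simp [torus, unipotent, Complex.exp_neg, Complex.exp_log ha, mul_div_cancel₀ _ ha]

lemma Differentiable.iteratedDeriv_eq_zero_of_norm_le {ψ : ℂ → ℂ} (hψ : Differentiable ℂ ψ)
    {k n : ℕ} (hkn : k < n) {M : ℝ} (hM : ∀ z, 1 ≤ ‖z‖ → ‖ψ z‖ ≤ M * ‖z‖ ^ k) :
    iteratedDeriv n ψ 0 = 0 := by
  have hcauchy : ∀ R : ℝ, 1 ≤ R → ‖iteratedDeriv n ψ 0‖ ≤ n.factorial * M / R ^ (n - k) := by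
    intro R hR
    have hR0 : 0 < R := one_pos.trans_le hR
    have hsphere : ∀ z ∈ Metric.sphere (0 : ℂ) R, ‖ψ z‖ ≤ M * R ^ k := fun z hz => by
      rw [← mem_sphere_zero_iff_norm.mp hz]
      exact hM z (by rwa [mem_sphere_zero_iff_norm.mp hz])
    calc ‖iteratedDeriv n ψ 0‖ ≤ n.factorial * (M * R ^ k) / R ^ n :=
          Complex.norm_iteratedDeriv_le_of_forall_mem_sphere_norm_le n hR0 hψ.diffContOnCl hsphere
      _ = n.factorial * M / R ^ (n - k) := by
          rw [← Nat.add_sub_cancel' hkn.le, pow_add, Nat.add_sub_cancel_left]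
          field_simp
  have hlim : Filter.Tendsto (fun R : ℝ => n.factorial * M / R ^ (n - k)) Filter.atTop (nhds 0) :=
    tendsto_const_nhds.div_atTop (Filter.tendsto_pow_atTop (by omega))
  exact norm_le_zero_iff.mp (ge_of_tendsto hlim (Filter.eventually_atTop.2 ⟨1, hcauchy⟩))

lemma Differentiable.exists_eq_sum_pow_of_norm_le {ψ : ℂ → ℂ} (hψ : Differentiable ℂ ψ)
    {k : ℕ} {M : ℝ} (hM : ∀ z, 1 ≤ ‖z‖ → ‖ψ z‖ ≤ M * ‖z‖ ^ k) :
    ∃ c : Fin (k + 1) → ℂ, ∀ z, ψ z = ∑ m : Fin (k + 1), c m * z ^ (m : ℕ) := by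
  refine ⟨fun m => ((m : ℕ).factorial : ℂ)⁻¹ * iteratedDeriv m ψ 0, fun z => ?_⟩
  rw [← Complex.taylorSeries_eq_of_entire' 0 z hψ, tsum_eq_sum (s := Finset.range (k + 1)),
    ← Fin.sum_univ_eq_sum_range fun n => (n.factorial : ℂ)⁻¹ * iteratedDeriv n ψ 0 * (z - 0) ^ n]
  · simp
  · intro n hn
    rw [hψ.iteratedDeriv_eq_zero_of_norm_le (by simpa using hn) hM]
    simp

lemma exists_eq_sum_pow_of_eq_pow_mul_inv {ψ χ : ℂ → ℂ} (hψ : Differentiable ℂ ψ)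
    (hχ : Continuous χ) {k : ℕ} (hψχ : ∀ z ≠ 0, ψ z = z ^ k * χ z⁻¹) :
    ∃ c : Fin (k + 1) → ℂ, ∀ z, ψ z = ∑ m : Fin (k + 1), c m * z ^ (m : ℕ) := by
  obtain ⟨M, hM⟩ := (isCompact_closedBall (0 : ℂ) 1).exists_bound_of_continuousOn hχ.continuousOn
  refine hψ.exists_eq_sum_pow_of_norm_le (M := M) fun z hz => ?_
  have hz0 : z ≠ 0 := norm_pos_iff.mp (one_pos.trans_le hz)
  have hχz : ‖χ z⁻¹‖ ≤ M := hM _ (by simpa using inv_le_one_of_one_le₀ hz)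
  rw [hψχ z hz0, norm_mul, norm_pow, mul_comm]
  exact mul_le_mul_of_nonneg_right hχz (by positivity)

def weylLine (z : ℂ) : Mat := !![z, -1; 1, 0]

def lowerUnipotent (w : ℂ) : Mat := !![1, 0; w, 1]

lemma weylLine_mem_SL2 (z : ℂ) : weylLine z ∈ SL2 := by simp [SL2, weylLine]

lemma lowerUnipotent_mem_SL2 (w : ℂ) : lowerUnipotent w ∈ SL2 := by simp [SL2, lowerUnipotent]

lemma differentiable_weylLine : Differentiable ℂ weylLine :=
  differentiable_pi.2 fun i => differentiable_pi.2 fun j => by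
    fin_cases i <;> fin_cases j <;> simp [weylLine]

lemma differentiable_lowerUnipotent : Differentiable ℂ lowerUnipotent :=
  differentiable_pi.2 fun i => differentiable_pi.2 fun j => by
    fin_cases i <;> fin_cases j <;> simp [lowerUnipotent]

lemma eq_weylLine_mul {U : Mat} (hU : U ∈ SL2) (hc : U 1 0 ≠ 0) :
    U = weylLine (U 0 0 / U 1 0) * !![U 1 0, U 1 1; 0, (U 1 0)⁻¹] := by
  have hdet : U 0 0 * U 1 1 - U 0 1 * U 1 0 = 1 := by simpa [SL2, Matrix.det_fin_two] using hU
  ext i j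
  fin_cases i <;> fin_cases j <;> simp [weylLine]
  · field_simp
  · field_simp; linear_combination -hdet

lemma eq_lowerUnipotent_mul {U : Mat} (hU : U ∈ SL2) (ha : U 0 0 ≠ 0) :
    U = lowerUnipotent (U 1 0 / U 0 0) * !![U 0 0, U 0 1; 0, (U 0 0)⁻¹] := by
  have hdet : U 0 0 * U 1 1 - U 0 1 * U 1 0 = 1 := by simpa [SL2, Matrix.det_fin_two] using hU
  ext i j
  fin_cases i <;> fin_cases j <;> simp [lowerUnipotent]
  · field_simp
  · field_simp; linear_combination hdet

structure IsHighestWeightVector (k : ℕ) (h : Mat → ℂ) : Prop where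
  holSL2 : HolSL2 h
  lieD_H0m : ∀ U ∈ SL2, lieD H0m h U = k * h U
  lieD_Hppm : ∀ U ∈ SL2, lieD Hppm h U = 0

lemma isHighestWeightVector_sub {k : ℕ} {f f₀ g : Mat → ℂ} (hf : HolSL2 f) (hf₀ : HolSL2 f₀)
    (hfH0m : ∀ U ∈ SL2, lieD H0m f U = k * f U) (hf₀H0m : ∀ U ∈ SL2, lieD H0m f₀ U = k * f₀ U)
    (hfHppm : ∀ U ∈ SL2, lieD Hppm f U = g U) (hf₀Hppm : ∀ U ∈ SL2, lieD Hppm f₀ U = g U) :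
    IsHighestWeightVector k (fun U => f U - f₀ U) where
  holSL2 := hf.sub hf₀
  lieD_H0m U hU := by
    rw [lieD_sub (hf.differentiableAt hU) (hf₀.differentiableAt hU), hfH0m U hU, hf₀H0m U hU,
      mul_sub]
  lieD_Hppm U hU := by
    rw [lieD_sub (hf.differentiableAt hU) (hf₀.differentiableAt hU), hfHppm U hU, hf₀Hppm U hU,
      sub_self]

namespace IsHighestWeightVector

variable {k : ℕ} {h : Mat → ℂ}

lemma apply_mul_upperTriangular (hh : IsHighestWeightVector k h) {M : Mat} (hM : M ∈ SL2)
    {a : ℂ} (ha : a ≠ 0) (b : ℂ) : h (M * !![a, b; 0, a⁻¹]) = a ^ k * h M := by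
  rw [upperTriangular_eq_torus_mul_unipotent ha, ← mul_assoc,
    isOneParamSubgroup_unipotent.apply_mul_eq_exp_mul hh.holSL2 (μ := 0)
      (by simpa using hh.lieD_Hppm) (mul_mem_SL2 hM (isOneParamSubgroup_torus.mem_SL2 _)),
    isOneParamSubgroup_torus.apply_mul_eq_exp_mul hh.holSL2 hh.lieD_H0m hM,
    zero_mul, Complex.exp_zero, one_mul, Complex.exp_nat_mul, Complex.exp_log ha]

lemma apply_eq_pow_mul_apply_weylLine (hh : IsHighestWeightVector k h) {U : Mat}
    (hU : U ∈ SL2) (hc : U 1 0 ≠ 0) : h U = U 1 0 ^ k * h (weylLine (U 0 0 / U 1 0)) := by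
  conv_lhs => rw [eq_weylLine_mul hU hc]
  exact hh.apply_mul_upperTriangular (weylLine_mem_SL2 _) hc _

lemma apply_eq_pow_mul_apply_lowerUnipotent (hh : IsHighestWeightVector k h) {U : Mat}
    (hU : U ∈ SL2) (ha : U 0 0 ≠ 0) : h U = U 0 0 ^ k * h (lowerUnipotent (U 1 0 / U 0 0)) := by
  conv_lhs => rw [eq_lowerUnipotent_mul hU ha]
  exact hh.apply_mul_upperTriangular (lowerUnipotent_mem_SL2 _) ha _

end IsHighestWeightVector

def binaryForm (k : ℕ) (c : Fin (k + 1) → ℂ) (U : Mat) : ℂ :=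
  ∑ m : Fin (k + 1), c m * U 0 0 ^ (m : ℕ) * U 1 0 ^ (k - (m : ℕ))

lemma pow_mul_div_pow {K : Type*} [Field K] {x : K} (hx : x ≠ 0) (y : K) {k m : ℕ} (hm : m ≤ k) :
    x ^ k * (y / x) ^ m = y ^ m * x ^ (k - m) := by
  rw [← Nat.sub_add_cancel hm, pow_add, Nat.add_sub_cancel, div_pow]
  field_simp

lemma IsHighestWeightVector.exists_eq_binaryForm {k : ℕ} {h : Mat → ℂ}
    (hh : IsHighestWeightVector k h) : ∃ c, ∀ U ∈ SL2, h U = binaryForm k c U := by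
  have hψ : Differentiable ℂ (fun z => h (weylLine z)) :=
    hh.holSL2.differentiable_comp differentiable_weylLine weylLine_mem_SL2
  have hχ : Continuous (fun w => h (lowerUnipotent w)) :=
    (hh.holSL2.differentiable_comp differentiable_lowerUnipotent lowerUnipotent_mem_SL2).continuous
  obtain ⟨c, hc⟩ := exists_eq_sum_pow_of_eq_pow_mul_inv hψ hχ fun z hz => by
    have := hh.apply_eq_pow_mul_apply_lowerUnipotent (weylLine_mem_SL2 z) hz
    rwa [show weylLine z 1 0 = 1 from rfl, show weylLine z 0 0 = z from rfl, one_div] at this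
  have hχc : (fun w => h (lowerUnipotent w)) = fun w => ∑ m : Fin (k + 1), c m * w ^ (k - m) := by
    refine hχ.ext_on (dense_compl_singleton 0) (by fun_prop) fun w hw => ?_
    have hw : w ≠ 0 := hw
    dsimp only
    rw [hh.apply_eq_pow_mul_apply_weylLine (lowerUnipotent_mem_SL2 w) hw,
      show lowerUnipotent w 1 0 = w from rfl, show lowerUnipotent w 0 0 = 1 from rfl, hc,
      Finset.mul_sum]
    refine Finset.sum_congr rfl fun m _ => ?_
    rw [mul_left_comm, pow_mul_div_pow hw _ (Nat.lt_succ_iff.mp m.isLt), one_pow, one_mul]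
  refine ⟨c, fun U hU => ?_⟩
  rcases ne_or_eq (U 1 0) 0 with hc0 | hc0
  · rw [hh.apply_eq_pow_mul_apply_weylLine hU hc0, hc, binaryForm, Finset.mul_sum]
    refine Finset.sum_congr rfl fun m _ => ?_
    rw [mul_left_comm, pow_mul_div_pow hc0 _ (Nat.lt_succ_iff.mp m.isLt), mul_assoc]
  · have ha : U 0 0 ≠ 0 := by
      rintro ha
      simp [SL2, Matrix.det_fin_two, ha, hc0] at hU
    rw [hh.apply_eq_pow_mul_apply_lowerUnipotent hU ha, congrFun hχc, binaryForm, Finset.mul_sum]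
    refine Finset.sum_congr rfl fun m _ => ?_
    rw [mul_left_comm, pow_mul_div_pow ha _ (Nat.sub_le _ _),
      Nat.sub_sub_self (Nat.lt_succ_iff.mp m.isLt)]
    ring

lemma binaryForm_mul_unipotent (k : ℕ) (c : Fin (k + 1) → ℂ) (U : Mat) (s : ℂ) :
    binaryForm k c (U * unipotent s) = binaryForm k c U := by
  simp [binaryForm, unipotent, Matrix.mul_apply, Fin.sum_univ_two]

lemma binaryForm_mul_torus (k : ℕ) (c : Fin (k + 1) → ℂ) (U : Mat) (t : ℂ) :
    binaryForm k c (U * torus t) = Complex.exp (k * t) * binaryForm k c U := by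
  simp only [binaryForm, torus, Matrix.mul_apply, Fin.sum_univ_two, Finset.mul_sum]
  refine Finset.sum_congr rfl fun m _ => ?_
  simp only [Matrix.of_apply, Matrix.cons_val', Matrix.cons_val_zero, Matrix.cons_val_one,
    Matrix.empty_val', Matrix.cons_val_fin_one, mul_zero, add_zero, mul_pow, Complex.exp_nat_mul]
  rw [← pow_mul_pow_sub _ (Nat.lt_succ_iff.mp m.isLt)]
  ring

lemma binaryForm_weylLine (k : ℕ) (c : Fin (k + 1) → ℂ) (z : ℂ) :
    binaryForm k c (weylLine z) = ∑ m : Fin (k + 1), c m * z ^ (m : ℕ) := by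
  simp [binaryForm, weylLine]

lemma binaryForm_injective_on_SL2 {k : ℕ} {c c' : Fin (k + 1) → ℂ}
    (h : ∀ U ∈ SL2, binaryForm k c U = binaryForm k c' U) : c = c' := by
  rw [← sub_eq_zero]
  refine Matrix.eq_zero_of_forall_index_sum_mul_pow_eq_zero
    (f := fun j : Fin (k + 1) => ((j : ℕ) : ℂ)) (fun i j hij => Fin.ext (Nat.cast_injective hij))
    fun j => ?_
  have := h _ (weylLine_mem_SL2 ((j : ℕ) : ℂ))
  rw [binaryForm_weylLine, binaryForm_weylLine, ← sub_eq_zero, ← Finset.sum_sub_distrib] at this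
  simpa [sub_mul] using this

theorem stmt_10_general (k : ℕ) (g : Matrix (Fin 2) (Fin 2) ℂ → ℂ)
    (f₀ : Matrix (Fin 2) (Fin 2) ℂ → ℂ) (hf₀ : HolSL2 f₀)
    (hf₀ch : ∀ U ∈ SL2, lieD H0m f₀ U = (k : ℂ) * f₀ U)
    (hf₀eq : ∀ U ∈ SL2, lieD Hppm f₀ U = g U) :
    (∀ f : Matrix (Fin 2) (Fin 2) ℂ → ℂ, HolSL2 f →
      (((∀ U ∈ SL2, lieD H0m f U = (k : ℂ) * f U) ∧
        (∀ U ∈ SL2, lieD Hppm f U = g U)) ↔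
       ∃ c : Fin (k + 1) → ℂ, ∀ U ∈ SL2,
         f U = f₀ U + ∑ m : Fin (k + 1), c m * U 0 0 ^ (m : ℕ) * U 1 0 ^ (k - (m : ℕ)))) ∧
    (∀ c c' : Fin (k + 1) → ℂ,
      (∀ U ∈ SL2,
        (∑ m : Fin (k + 1), c m * U 0 0 ^ (m : ℕ) * U 1 0 ^ (k - (m : ℕ))) =
        (∑ m : Fin (k + 1), c' m * U 0 0 ^ (m : ℕ) * U 1 0 ^ (k - (m : ℕ)))) →
      c = c') := by
  refine ⟨fun f hf => ⟨fun ⟨hfch, hfeq⟩ => ?_, fun ⟨c, hc⟩ => ⟨fun U hU => ?_, fun U hU => ?_⟩⟩,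
    fun c c' => binaryForm_injective_on_SL2⟩
  · obtain ⟨c, hc⟩ :=
      (isHighestWeightVector_sub hf hf₀ hfch hf₀ch hfeq hf₀eq).exists_eq_binaryForm
    exact ⟨c, fun U hU => by rw [← binaryForm, ← hc U hU, add_sub_cancel]⟩
  · rw [isOneParamSubgroup_torus.lieD_eq_of_eqOn_add hf hf₀
      (fun U _ t => binaryForm_mul_torus k c U t) hc hU, hf₀ch U hU, hc U hU, binaryForm]
    ring
  · have hp U (_ : U ∈ SL2) t :
        binaryForm k c (U * unipotent t) = Complex.exp (0 * t) * binaryForm k c U := by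
      rw [zero_mul, Complex.exp_zero, one_mul, binaryForm_mul_unipotent]
    rw [isOneParamSubgroup_unipotent.lieD_eq_of_eqOn_add hf hf₀ hp hc hU, hf₀eq U hU, zero_mul,
      add_zero]

theorem stmt_10 (k : ℕ) (g : Matrix (Fin 2) (Fin 2) ℂ → ℂ) (hg : HolSL2 g)
    (hgch : ∀ U ∈ SL2, lieD H0m g U = ((k : ℂ) + 2) * g U)
    (f₀ : Matrix (Fin 2) (Fin 2) ℂ → ℂ) (hf₀ : HolSL2 f₀)
    (hf₀ch : ∀ U ∈ SL2, lieD H0m f₀ U = (k : ℂ) * f₀ U)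
    (hf₀eq : ∀ U ∈ SL2, lieD Hppm f₀ U = g U) :
    (∀ f : Matrix (Fin 2) (Fin 2) ℂ → ℂ, HolSL2 f →
      (((∀ U ∈ SL2, lieD H0m f U = (k : ℂ) * f U) ∧
        (∀ U ∈ SL2, lieD Hppm f U = g U)) ↔
       ∃ c : Fin (k + 1) → ℂ, ∀ U ∈ SL2,
         f U = f₀ U + ∑ m : Fin (k + 1), c m * U 0 0 ^ (m : ℕ) * U 1 0 ^ (k - (m : ℕ)))) ∧
    (∀ c c' : Fin (k + 1) → ℂ,
      (∀ U ∈ SL2,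
        (∑ m : Fin (k + 1), c m * U 0 0 ^ (m : ℕ) * U 1 0 ^ (k - (m : ℕ))) =
        (∑ m : Fin (k + 1), c' m * U 0 0 ^ (m : ℕ) * U 1 0 ^ (k - (m : ℕ)))) →
      c = c') :=
  stmt_10_general k g f₀ hf₀ hf₀ch hf₀eq
end
end

section
/- On the manifold N = SL_2(C) × V × C^{4n} (with V ⊂ C^{4n} open), let ĤF be a holomorphic map ĤF(U,z,w) = F(U,w) with H0 · F = 2F, and define vector fields Ĥ0 and Ĥ++ lifting H0 and H++ with ∂/∂w-components 0 and F^{ia}(U,w) ∂/∂w^{ia} respectively. Then [Ĥ0, Ĥ++] = 2 Ĥ++, so the distribution spanned by Ĥ0 and Ĥ++ is involutive. -/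
/-! Along `SL₂(ℂ)` both lifted fields are right multiplications `U ↦ U A`, whose bracket is
`U ↦ U (A B - B A)`, and `[H₀, H₊₊] = 2 H₊₊`. In the `w`-direction only `Ĥ₊₊` has a component,
so the bracket there is the derivative of `F` along `Ĥ₀`, which the charge condition makes `2 F`. -/

open Matrix

noncomputable section

attribute [local instance] Matrix.normedAddCommGroup Matrix.normedSpace

/-- ℂ^{4n}, indexed by pairs (i,a), i = 1,2, a = 1,…,2n (as in z^{ia}, w^{ia}). -/
abbrev W4 (n : ℕ) := Fin 2 × Fin (2 * n) → ℂ

/-- Lie bracket of vector fields on a normed space. -/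
def VBr {E : Type*} [NormedAddCommGroup E] [NormedSpace ℂ E] (X Y : E → E) (x : E) : E :=
  fderiv ℂ Y x (X x) - fderiv ℂ X x (Y x)

/-- The lift Ĥ₀ of H₀ to N = SL₂(ℂ) × V × ℂ^{4n} (zero ∂/∂z- and ∂/∂w-components). -/
def hatH0 (n : ℕ) (x : Matrix (Fin 2) (Fin 2) ℂ × W4 n × W4 n) :
    Matrix (Fin 2) (Fin 2) ℂ × W4 n × W4 n := (x.1 * H0m, 0, 0)

/-- The lift Ĥ₊₊, with ∂/∂w-component F^{ia}(U,w) ∂/∂w^{ia}. -/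
def hatHpp (n : ℕ) (F : Matrix (Fin 2) (Fin 2) ℂ × W4 n → W4 n)
    (x : Matrix (Fin 2) (Fin 2) ℂ × W4 n × W4 n) :
    Matrix (Fin 2) (Fin 2) ℂ × W4 n × W4 n := (x.1 * Hppm, 0, F (x.1, x.2.2))

lemma H0m_mul_Hppm_sub_Hppm_mul_H0m : H0m * Hppm - Hppm * H0m = (2 : ℂ) • Hppm := by
  ext i j
  fin_cases i <;> fin_cases j <;> norm_num [H0m, Hppm]

lemma VBr_eq_of_hasFDerivAt {E : Type*} [NormedAddCommGroup E] [NormedSpace ℂ E]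
    {X Y : E → E} {X' Y' : E →L[ℂ] E} {x : E} (hX : HasFDerivAt X X' x)
    (hY : HasFDerivAt Y Y' x) : VBr X Y x = Y' (X x) - X' (Y x) := by
  rw [VBr, hX.fderiv, hY.fderiv]

def mulRightCLM {m : Type*} [Fintype m] [DecidableEq m] (B : Matrix m m ℂ) :
    Matrix m m ℂ →L[ℂ] Matrix m m ℂ :=
  LinearMap.toContinuousLinearMap (LinearMap.mulRight ℂ B)

section LiftedFields

variable {n : ℕ}

lemma hasFDerivAt_hatH0 (x : Matrix (Fin 2) (Fin 2) ℂ × W4 n × W4 n) :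
    HasFDerivAt (hatH0 n)
      (((mulRightCLM H0m).comp (ContinuousLinearMap.fst ℂ _ _)).prod 0) x :=
  (((mulRightCLM H0m).comp (ContinuousLinearMap.fst ℂ _ (W4 n × W4 n))).prod
    (0 : _ →L[ℂ] W4 n × W4 n)).hasFDerivAt

lemma hasFDerivAt_hatHpp {F : Matrix (Fin 2) (Fin 2) ℂ × W4 n → W4 n}
    {x : Matrix (Fin 2) (Fin 2) ℂ × W4 n × W4 n} (hF : DifferentiableAt ℂ F (x.1, x.2.2)) :
    HasFDerivAt (hatHpp n F)
      (((mulRightCLM Hppm).comp (ContinuousLinearMap.fst ℂ _ _)).prod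
        ((0 : _ →L[ℂ] W4 n).prod ((fderiv ℂ F (x.1, x.2.2)).comp
          ((ContinuousLinearMap.fst ℂ _ _).prod
            ((ContinuousLinearMap.snd ℂ _ _).comp (ContinuousLinearMap.snd ℂ _ _)))))) x :=
  ((mulRightCLM Hppm).comp (ContinuousLinearMap.fst ℂ _ (W4 n × W4 n))).hasFDerivAt.prodMk
    ((hasFDerivAt_const _ x).prodMk
      (hF.hasFDerivAt.comp x (hasFDerivAt_fst.prodMk hasFDerivAt_snd.snd)))

end LiftedFields

theorem stmt_12_general (n : ℕ) (V : Set (W4 n))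
    (F : Matrix (Fin 2) (Fin 2) ℂ × W4 n → W4 n) (hF : Differentiable ℂ F)
    (hcharge : ∀ (U : Matrix (Fin 2) (Fin 2) ℂ) (w : W4 n), U.det = 1 →
      fderiv ℂ F (U, w) (U * H0m, 0) = (2 : ℂ) • F (U, w)) :
    ∀ x : Matrix (Fin 2) (Fin 2) ℂ × W4 n × W4 n, x.1.det = 1 → x.2.1 ∈ V →
      VBr (hatH0 n) (hatHpp n F) x = (2 : ℂ) • hatHpp n F x := by
  rintro ⟨U, z, w⟩ hdet -
  rw [VBr_eq_of_hasFDerivAt (hasFDerivAt_hatH0 _) (hasFDerivAt_hatHpp (hF _))]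
  refine Prod.ext ?_ (Prod.ext ?_ ?_)
  · show U * H0m * Hppm - U * Hppm * H0m = (2 : ℂ) • (U * Hppm)
    rw [Matrix.mul_assoc, Matrix.mul_assoc, ← Matrix.mul_sub,
      H0m_mul_Hppm_sub_Hppm_mul_H0m, Matrix.mul_smul]
  · show (0 : W4 n) - 0 = (2 : ℂ) • 0
    rw [sub_zero, smul_zero]
  · show fderiv ℂ F (U, w) (U * H0m, 0) - 0 = (2 : ℂ) • F (U, w)
    rw [sub_zero, hcharge U w hdet]

theorem stmt_12 (n : ℕ) (V : Set (W4 n)) (hV : IsOpen V)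
    (F : Matrix (Fin 2) (Fin 2) ℂ × W4 n → W4 n) (hF : Differentiable ℂ F)
    (hcharge : ∀ (U : Matrix (Fin 2) (Fin 2) ℂ) (w : W4 n), U.det = 1 →
      fderiv ℂ F (U, w) (U * H0m, 0) = (2 : ℂ) • F (U, w)) :
    ∀ x : Matrix (Fin 2) (Fin 2) ℂ × W4 n × W4 n, x.1.det = 1 → x.2.1 ∈ V →
      VBr (hatH0 n) (hatHpp n F) x = (2 : ℂ) • hatHpp n F x :=
  stmt_12_general n V F hF hcharge
end
end

section
/- Suppose h : SL_2(C) × V → C^{4n} is holomorphic, satisfies H0·h = 0, H++·h|_{(U,z)} = F(U, h(U,z)) with H0·F = 2F, and satisfies the symmetry h(U,z) = h(ψ(U),z) where ψ(U) = (U^T)^{-1}. Then h automatically satisfies the third equation H--·h|_{(U,z)} = -F(ψ(U), h(ψ(U), z)). -/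
open Matrix

noncomputable section

attribute [local instance] Matrix.normedAddCommGroup Matrix.normedSpace

/-- ψ(U) = (Uᵀ)⁻¹. -/
def psiMap (U : Matrix (Fin 2) (Fin 2) ℂ) : Matrix (Fin 2) (Fin 2) ℂ := (Uᵀ)⁻¹

/-!
The one-parameter subgroups `t ↦ U exp(t H₋₋) = U (1 + t H₋₋)` and
`t ↦ ψ(U) exp(-t H₊₊) = ψ(U) (1 - t H₊₊)` are exchanged by `ψ`, since `ψ` is a group
automorphism and `(1 + t H₋₋)ᵀ⁻¹ = 1 - t H₊₊`. The symmetry `h = h ∘ ψ` therefore makes `h`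
agree along these two curves, so their derivatives at `t = 0` agree:
`H₋₋ h (U, z) = -H₊₊ h (ψ U, z) = -F (ψ U, h (ψ U, z))`.
-/

theorem fderiv_apply_eq_of_forall_line_eq {𝕜 E F : Type*} [NontriviallyNormedField 𝕜]
    [NormedAddCommGroup E] [NormedSpace 𝕜 E] [NormedAddCommGroup F] [NormedSpace 𝕜 F]
    {f : E → F} {x y v w : E} (hx : DifferentiableAt 𝕜 f x) (hy : DifferentiableAt 𝕜 f y)
    (hline : ∀ t : 𝕜, f (x + t • v) = f (y + t • w)) :
    fderiv 𝕜 f x v = fderiv 𝕜 f y w := by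
  rw [← hx.lineDeriv_eq_fderiv, ← hy.lineDeriv_eq_fderiv, lineDeriv, lineDeriv]
  simp_rw [hline]

theorem Hmmm_transpose : Hmmmᵀ = Hppm := by
  ext i j; fin_cases i <;> fin_cases j <;> simp [Hmmm, Hppm]

theorem Hppm_mul_self : Hppm * Hppm = 0 := by
  ext i j; fin_cases i <;> fin_cases j <;> simp [Hppm, Matrix.mul_apply, Fin.sum_univ_two]

theorem det_one_add_smul_Hmmm (t : ℂ) : (1 + t • Hmmm).det = 1 := by
  simp [Matrix.det_fin_two, Hmmm]

theorem inv_one_add_smul_Hppm (t : ℂ) : (1 + t • Hppm)⁻¹ = 1 - t • Hppm := by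
  apply Matrix.inv_eq_right_inv
  rw [add_mul, one_mul, mul_sub, mul_one, Matrix.smul_mul, Matrix.mul_smul, Hppm_mul_self]
  simp

theorem det_psiMap (U : Matrix (Fin 2) (Fin 2) ℂ) : (psiMap U).det = (U.det)⁻¹ := by
  rw [psiMap, Matrix.det_nonsing_inv, Matrix.det_transpose, Ring.inverse_eq_inv']

theorem psiMap_mul_one_add_smul_Hmmm (U : Matrix (Fin 2) (Fin 2) ℂ) (t : ℂ) :
    psiMap (U * (1 + t • Hmmm)) = psiMap U * (1 - t • Hppm) := by
  rw [psiMap, psiMap, Matrix.transpose_mul, Matrix.mul_inv_rev, Matrix.transpose_add,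
    Matrix.transpose_one, Matrix.transpose_smul, Hmmm_transpose, inv_one_add_smul_Hppm]

theorem stmt_14_general (n : ℕ)
    (h : Matrix (Fin 2) (Fin 2) ℂ × W4 n → W4 n) (hh : Differentiable ℂ h)
    (F : Matrix (Fin 2) (Fin 2) ℂ × W4 n → W4 n)
    (hHpp : ∀ (U : Matrix (Fin 2) (Fin 2) ℂ) (z : W4 n), U.det = 1 →
      fderiv ℂ h (U, z) (U * Hppm, 0) = F (U, h (U, z)))
    (hsym : ∀ (U : Matrix (Fin 2) (Fin 2) ℂ) (z : W4 n), U.det = 1 →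
      h (U, z) = h (psiMap U, z)) :
    ∀ (U : Matrix (Fin 2) (Fin 2) ℂ) (z : W4 n), U.det = 1 →
      fderiv ℂ h (U, z) (U * Hmmm, 0) = -F (psiMap U, h (psiMap U, z)) := by
  intro U z hU
  have hψU : (psiMap U).det = 1 := by rw [det_psiMap, hU, inv_one]
  have hline : ∀ t : ℂ, h ((U, z) + t • (U * Hmmm, 0)) =
      h ((psiMap U, z) + t • (-(psiMap U * Hppm), 0)) := by
    intro t
    have hdet : (U * (1 + t • Hmmm)).det = 1 := by
      rw [Matrix.det_mul, hU, det_one_add_smul_Hmmm, one_mul]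
    simp only [Prod.smul_mk, Prod.mk_add_mk, smul_zero, add_zero, smul_neg, ← sub_eq_add_neg]
    rw [← Matrix.mul_smul, ← Matrix.mul_smul, ← mul_one_add, ← mul_one_sub, hsym _ z hdet,
      psiMap_mul_one_add_smul_Hmmm]
  refine (fderiv_apply_eq_of_forall_line_eq (hh _) (hh _) hline).trans ?_
  rw [← neg_zero, ← Prod.neg_mk, map_neg]
  exact congrArg Neg.neg (hHpp _ z hψU)

theorem stmt_14 (n : ℕ)
    (h : Matrix (Fin 2) (Fin 2) ℂ × W4 n → W4 n) (hh : Differentiable ℂ h)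
    (F : Matrix (Fin 2) (Fin 2) ℂ × W4 n → W4 n) (hF : Differentiable ℂ F)
    (hFcharge : ∀ (U : Matrix (Fin 2) (Fin 2) ℂ) (w : W4 n), U.det = 1 →
      fderiv ℂ F (U, w) (U * H0m, 0) = (2 : ℂ) • F (U, w))
    (hH0 : ∀ (U : Matrix (Fin 2) (Fin 2) ℂ) (z : W4 n), U.det = 1 →
      fderiv ℂ h (U, z) (U * H0m, 0) = 0)
    (hHpp : ∀ (U : Matrix (Fin 2) (Fin 2) ℂ) (z : W4 n), U.det = 1 →
      fderiv ℂ h (U, z) (U * Hppm, 0) = F (U, h (U, z)))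
    (hsym : ∀ (U : Matrix (Fin 2) (Fin 2) ℂ) (z : W4 n), U.det = 1 →
      h (U, z) = h (psiMap U, z)) :
    ∀ (U : Matrix (Fin 2) (Fin 2) ℂ) (z : W4 n), U.det = 1 →
      fderiv ℂ h (U, z) (U * Hmmm, 0) = -F (psiMap U, h (psiMap U, z)) :=
  stmt_14_general n h hh F hHpp hsym
end
end
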